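/- Let (M,g) be a lightlike hypersurface, tangent to the structure vector field ζ, of an indefinite Sasakian manifold (M̄, φ̄, ζ, η, ḡ), whose local second fundamental form B is parallel. Then for all X, Y tangent to M: (i) B(X, φY) + B(Y, φX) + τ(X)u(Y) = 0; (ii) A*_ξ V = 0; (iii) A*_ξ(φ(A*_ξ X)) = 0. -/
import Mathlib


/-- An algebraic model, at the level of (local) smooth functions and vector fields, of a
lightlike hypersurface `(M,g)`, tangent to the structure vector field `ζ`, of an
indefinite Sasakian manifold `(M̄, φ̄, ζ, η, ḡ)`, together with a chosen screen
distribution `S(TM)` (containing `ζ`, `φ̄ ξ` and `φ̄ N`), a (local) section `ξ` of the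
rank-one normal bundle `TM⊥ ⊆ TM`, the associated null transversal section `N`, and all
the induced objects of the Gauss–Weingarten equations.

* `F` models the commutative `ℝ`-algebra of smooth functions on (an open subset of) `M`;
* `E` models the `F`-module of sections of the ambient tangent bundle `TM̄` restricted to `M`;
* `η(X)` is encoded throughout as `ḡ(X,ζ)`, `u(X)` as `g(X,V)`, `v(X)` as `g(X,U)` and
  `θ(X)` as `ḡ(X,N)`. -/
structure SasakiLightlikeHypersurface (F : Type) [CommRing F] [Algebra ℝ F]
    (E : Type) [AddCommGroup E] [Module F E] where
  /-- the submodule of vector fields tangent to the hypersurface `M` -/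
  TM : Submodule F E
  /-- the ambient metric `ḡ` (whose restriction to `TM` is the degenerate induced metric `g`) -/
  gbar : E →ₗ[F] E →ₗ[F] F
  gbar_symm : ∀ X Y : E, gbar X Y = gbar Y X
  /-- the directional derivative `X ⬝ f` of functions along tangent vector fields -/
  D : TM → Derivation ℝ F F
  D_add : ∀ X Y : TM, D (X + Y) = D X + D Y
  D_smul : ∀ (f : F) (X : TM) (k : F), D (f • X) k = f * D X k
  /-- the Lie bracket of vector fields tangent to `M` -/
  bracket : TM → TM → TM
  D_bracket : ∀ (X Y : TM) (f : F), D (bracket X Y) f = D X (D Y f) - D Y (D X f)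
  /-- the ambient Levi-Civita connection `∇̄`, in directions tangent to `M` -/
  nablaBar : TM → E → E
  nablaBar_add : ∀ (X Y : TM) (Z : E), nablaBar (X + Y) Z = nablaBar X Z + nablaBar Y Z
  nablaBar_smul : ∀ (f : F) (X : TM) (Z : E), nablaBar (f • X) Z = f • nablaBar X Z
  nablaBar_add' : ∀ (X : TM) (Y Z : E), nablaBar X (Y + Z) = nablaBar X Y + nablaBar X Z
  nablaBar_leibniz : ∀ (X : TM) (f : F) (Y : E),
    nablaBar X (f • Y) = D X f • Y + f • nablaBar X Y
  nablaBar_metric : ∀ (X : TM) (Y Z : E),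
    D X (gbar Y Z) = gbar (nablaBar X Y) Z + gbar Y (nablaBar X Z)
  nablaBar_torsion_free : ∀ X Y : TM,
    nablaBar X (Y : E) - nablaBar Y (X : E) = (bracket X Y : E)
  /-- a (local) section `ξ` of the rank-one lightlike normal bundle `TM⊥ ⊆ TM` -/
  xi : TM
  xi_normal : ∀ Y : TM, gbar (xi : E) (Y : E) = 0
  xi_spans : ∀ X : TM, (∀ Y : TM, gbar (X : E) (Y : E) = 0) →
    ∃ f : F, (X : E) = f • (xi : E)
  /-- the screen distribution `S(TM)`, a nondegenerate complement of `TM⊥` in `TM` -/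
  S : Submodule F E
  S_le : S ≤ TM
  S_compl : ∀ X : TM, ∃ W ∈ S, ∃ f : F, (X : E) = W + f • (xi : E)
  S_nondeg : ∀ W ∈ S, (∀ Z ∈ S, gbar W Z = 0) → W = 0
  /-- the null transversal section `N`, with `ḡ(ξ,N) = 1`, `ḡ(N,N) = 0`, `ḡ(N, S(TM)) = 0` -/
  Nt : E
  gbar_xi_Nt : gbar (xi : E) Nt = 1
  gbar_Nt_Nt : gbar Nt Nt = 0
  gbar_Nt_S : ∀ Z ∈ S, gbar Nt Z = 0
  /-- the induced connection `∇` on `M` -/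
  nabla : TM → TM → TM
  /-- the local second fundamental form `B` of `M` (the second fundamental form being
  `h(X,Y) = B(X,Y) N`) -/
  B : TM → TM → F
  /-- Gauss equation: `∇̄_X Y = ∇_X Y + B(X,Y) N` -/
  gauss : ∀ X Y : TM, nablaBar X (Y : E) = (nabla X Y : E) + B X Y • Nt
  /-- the shape operator `A_N` of `M` -/
  AN : TM → TM
  /-- the transversal `1`-form `τ`, so that the transversal connection is `∇ᵗ_X N = τ(X) N` -/
  tau : TM → F
  /-- Weingarten equation: `∇̄_X N = −A_N X + τ(X) N` -/
  weingarten : ∀ X : TM, nablaBar X Nt = -(AN X : E) + tau X • Nt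
  /-- the screen shape operator `A*_ξ` -/
  Astar : TM → TM
  /-- `∇_X ξ = −A*_ξ X − τ(X) ξ` -/
  weingarten_screen : ∀ X : TM, nablaBar X (xi : E) = -(Astar X : E) - tau X • (xi : E)
  /-- the projection `P` of `TM` onto `S(TM)`: `X = PX + θ(X) ξ`, `θ(X) = ḡ(X,N)` -/
  P : TM → TM
  P_mem : ∀ X : TM, (P X : E) ∈ S
  P_spec : ∀ X : TM, (X : E) = (P X : E) + gbar (X : E) Nt • (xi : E)
  /-- the induced connection `∇*` on the screen distribution -/
  nablaStar : TM → TM → TM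
  /-- the local second fundamental form `C` of the screen distribution -/
  C : TM → TM → F
  nablaStar_mem : ∀ (X Y : TM), (Y : E) ∈ S → (nablaStar X Y : E) ∈ S
  /-- screen Gauss equation: `∇_X PY = ∇*_X PY + C(X,PY) ξ` -/
  screen_gauss : ∀ (X Y : TM), (Y : E) ∈ S → nabla X Y = nablaStar X Y + C X Y • xi
  /-- the ambient almost contact structure tensor `φ̄` -/
  phibar : E →ₗ[F] E
  /-- the structure vector field `ζ`, tangent to `M` and lying in the screen distribution -/
  zeta : TM
  zeta_mem : (zeta : E) ∈ S
  gbar_zeta_zeta : gbar (zeta : E) (zeta : E) = 1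
  /-- `φ̄² X = −X + η(X) ζ`, where `η(X) = ḡ(X,ζ)` -/
  phibar_sq : ∀ X : E, phibar (phibar X) = -X + gbar X (zeta : E) • (zeta : E)
  /-- `ḡ(φ̄X, φ̄Y) = ḡ(X,Y) − η(X) η(Y)` -/
  phibar_metric : ∀ X Y : E,
    gbar (phibar X) (phibar Y) = gbar X Y - gbar X (zeta : E) * gbar Y (zeta : E)
  /-- Sasakian condition: `(∇̄_X φ̄) Y = ḡ(X,Y) ζ − η(Y) X` -/
  sasaki : ∀ (X : TM) (Y : E), nablaBar X (phibar Y) - phibar (nablaBar X Y)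
    = gbar (X : E) Y • (zeta : E) - gbar Y (zeta : E) • (X : E)
  /-- `∇̄_X ζ = −φ̄ X` -/
  sasaki_zeta : ∀ X : TM, nablaBar X (zeta : E) = -(phibar (X : E))
  /-- `U = −φ̄ N`, tangent to `M` and lying in the screen distribution -/
  U : TM
  U_mem : (U : E) ∈ S
  U_spec : (U : E) = -(phibar Nt)
  /-- `V = −φ̄ ξ`, tangent to `M` and lying in the screen distribution -/
  V : TM
  V_mem : (V : E) ∈ S
  V_spec : (V : E) = -(phibar (xi : E))
  /-- the induced structure tensor `φ` on `M` -/
  phi : TM → TM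
  /-- `φ̄ X = φ X + u(X) N`, where `u(X) = g(X,V)` -/
  phi_spec : ∀ X : TM, phibar (X : E) = (phi X : E) + gbar (X : E) (V : E) • Nt

namespace SasakiLightlikeHypersurface

variable {F : Type} [CommRing F] [Algebra ℝ F]
variable {E : Type} [AddCommGroup E] [Module F E]
variable (H : SasakiLightlikeHypersurface F E)

/-- `ḡ(X, ξ) = 0` for `X` tangent. -/
lemma gxi (X : H.TM) : H.gbar (X : E) (H.xi : E) = 0 := by
  rw [H.gbar_symm]; exact H.xi_normal X

lemma nablaBar_neg (X : H.TM) (W : E) : H.nablaBar X (-W) = - H.nablaBar X W := by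
  have h : (-W) = (-1 : F) • W := by simp
  have hD : H.D X (-1 : F) = 0 := by
    rw [show (-1:F) = -(1:F) by ring, map_neg, Derivation.map_one_eq_zero, neg_zero]
  rw [h, H.nablaBar_leibniz, hD]
  simp

/-- `ḡ(∇̄_X Y, ξ) = ḡ(A*X, Y)`. -/
lemma nb_xi (X Y : H.TM) :
    H.gbar (H.nablaBar X (Y:E)) (H.xi:E) = H.gbar (H.Astar X : E) (Y : E) := by
  have h := H.nablaBar_metric X (Y:E) (H.xi:E)
  rw [H.gxi Y, map_zero, H.weingarten_screen X] at h
  simp only [map_sub, map_neg, map_smul, smul_eq_mul, H.gxi Y] at h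
  rw [H.gbar_symm ((Y:E)) ((H.Astar X : E))] at h
  linear_combination -h

/-- `B(X,Y) = ḡ(A*X, Y)`. -/
lemma BeqA (X Y : H.TM) : H.B X Y = H.gbar (H.Astar X : E) (Y : E) := by
  have h := congrArg (fun W => H.gbar W (H.xi:E)) (H.gauss X Y)
  simp only [map_add, map_smul, LinearMap.add_apply, LinearMap.smul_apply, smul_eq_mul,
    H.gxi (H.nabla X Y)] at h
  rw [H.nb_xi X Y, H.gbar_symm H.Nt (H.xi:E), H.gbar_xi_Nt] at h
  linear_combination -h

/-- symmetry of `B`, expressed via `A*`. -/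
lemma Asymm (X Y : H.TM) :
    H.gbar (H.Astar X : E) (Y : E) = H.gbar (H.Astar Y : E) (X : E) := by
  have h := congrArg (fun W => H.gbar W (H.xi:E)) (H.nablaBar_torsion_free X Y)
  simp only [map_sub, LinearMap.sub_apply, H.gxi (H.bracket X Y), H.nb_xi X Y,
    H.nb_xi Y X] at h
  linear_combination h

/-- `ḡ(A*X, N) = 0`. -/
lemma AstarN (X : H.TM) : H.gbar (H.Astar X : E) H.Nt = 0 := by
  have h := H.nablaBar_metric X (H.xi:E) H.Nt
  rw [H.gbar_xi_Nt, Derivation.map_one_eq_zero, H.weingarten_screen X, H.weingarten X] at h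
  simp only [map_sub, map_neg, map_add, map_smul, LinearMap.sub_apply, LinearMap.neg_apply,
    LinearMap.add_apply, LinearMap.smul_apply, smul_eq_mul, H.gbar_xi_Nt] at h
  rw [H.gbar_symm (H.xi:E) ((H.AN X : E)), H.gxi (H.AN X)] at h
  linear_combination h

/-- a tangent field orthogonal to `TM` and to `N` vanishes. -/
lemma zero_tangent (Z : H.TM) (h1 : ∀ Y : H.TM, H.gbar (Z:E) (Y:E) = 0)
    (h2 : H.gbar (Z:E) H.Nt = 0) : Z = 0 := by
  obtain ⟨f, hf⟩ := H.xi_spans Z h1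
  have hfz : f = 0 := by
    have h3 := congrArg (fun W => H.gbar W H.Nt) hf
    simp only [map_smul, LinearMap.smul_apply, smul_eq_mul, H.gbar_xi_Nt, mul_one] at h3
    rw [h2] at h3; exact h3.symm
  apply Subtype.ext
  rw [hf, hfz, zero_smul]; rfl

/-- `η(φ̄X) = 0` for `X` tangent. -/
lemma eta_phibar (X : H.TM) : H.gbar (H.phibar (X:E)) (H.zeta : E) = 0 := by
  have h := H.nablaBar_metric X (H.zeta:E) (H.zeta:E)
  rw [H.gbar_zeta_zeta, Derivation.map_one_eq_zero, H.sasaki_zeta X] at h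
  simp only [map_neg, LinearMap.neg_apply] at h
  rw [H.gbar_symm (H.zeta:E) (H.phibar (X:E))] at h
  have h2 : (2:ℝ) • (H.gbar (H.phibar (X:E)) (H.zeta:E)) = 0 := by
    rw [two_smul]; linear_combination h
  calc H.gbar (H.phibar (X:E)) (H.zeta:E)
      = ((2:ℝ)⁻¹ * 2) • (H.gbar (H.phibar (X:E)) (H.zeta:E)) := by norm_num
    _ = (2:ℝ)⁻¹ • ((2:ℝ) • (H.gbar (H.phibar (X:E)) (H.zeta:E))) := by rw [smul_smul]
    _ = 0 := by rw [h2, smul_zero]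

/-- antisymmetry of `φ̄` on tangent vectors. -/
lemma antisym (X Y : H.TM) :
    H.gbar (H.phibar (X:E)) (Y:E) = - H.gbar (X:E) (H.phibar (Y:E)) := by
  have h := H.phibar_metric (H.phibar (X:E)) (Y:E)
  rw [H.phibar_sq (X:E), H.eta_phibar X] at h
  simp only [map_add, map_neg, map_smul, LinearMap.add_apply, LinearMap.neg_apply,
    LinearMap.smul_apply, smul_eq_mul] at h
  rw [H.gbar_symm (H.zeta:E) (H.phibar (Y:E)), H.eta_phibar Y] at h
  linear_combination -h

/-- `B(X,ζ) = -u(X)`. -/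
lemma Bzeta (X : H.TM) : H.B X H.zeta = - H.gbar (X:E) (H.V:E) := by
  have h : (H.nabla X H.zeta : E) + H.B X H.zeta • H.Nt
      = -(H.phi X : E) - H.gbar (X:E) (H.V:E) • H.Nt := by
    rw [← H.gauss X H.zeta, H.sasaki_zeta X, H.phi_spec X]; abel
  have h2 := congrArg (fun W => H.gbar W (H.xi:E)) h
  simp only [map_add, map_sub, map_neg, map_smul, LinearMap.add_apply, LinearMap.sub_apply,
    LinearMap.neg_apply, LinearMap.smul_apply, smul_eq_mul, H.gxi (H.nabla X H.zeta),
    H.gxi (H.phi X), H.gbar_symm H.Nt (H.xi:E), H.gbar_xi_Nt] at h2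
  linear_combination h2

/-- `∇_X ζ = -φX`. -/
lemma nabla_zeta (X : H.TM) : H.nabla X H.zeta = - H.phi X := by
  have h : (H.nabla X H.zeta : E) + H.B X H.zeta • H.Nt
      = -(H.phi X : E) - H.gbar (X:E) (H.V:E) • H.Nt := by
    rw [← H.gauss X H.zeta, H.sasaki_zeta X, H.phi_spec X]; abel
  rw [H.Bzeta X] at h
  apply Subtype.ext
  have h5 : (H.nabla X H.zeta : E) = -(H.phi X : E) := by
    calc (H.nabla X H.zeta : E)
        = ((H.nabla X H.zeta : E) + (- H.gbar (X:E) (H.V:E)) • H.Nt)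
            + H.gbar (X:E) (H.V:E) • H.Nt := by rw [neg_smul]; abel
      _ = (-(H.phi X : E) - H.gbar (X:E) (H.V:E) • H.Nt)
            + H.gbar (X:E) (H.V:E) • H.Nt := by rw [h]
      _ = -(H.phi X : E) := by abel
  simpa using h5

/-- `B(X,ξ) = 0`. -/
lemma Bxi (X : H.TM) : H.B X H.xi = 0 := by
  rw [H.BeqA, H.gxi (H.Astar X)]

/-- `∇_X ξ = -A*X - τ(X) ξ`. -/
lemma nabla_xi (X : H.TM) : H.nabla X H.xi = - H.Astar X - H.tau X • H.xi := by
  have h := H.gauss X H.xi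
  rw [H.Bxi X, zero_smul, add_zero, H.weingarten_screen X] at h
  apply Subtype.ext
  simpa using h.symm

/-- `∇̄_X V = φ(A*X) + u(A*X) N - τ(X) V`. -/
lemma nbV (X : H.TM) : H.nablaBar X (H.V:E)
    = (H.phi (H.Astar X) : E) + H.gbar (H.Astar X : E) (H.V:E) • H.Nt
      - H.tau X • (H.V:E) := by
  have hphixi : H.phibar (H.xi:E) = -(H.V:E) := by rw [H.V_spec, neg_neg]
  have hs := H.sasaki X (H.xi:E)
  rw [H.gxi X, zero_smul, H.gbar_symm (H.xi:E) (H.zeta:E), H.gxi H.zeta, zero_smul,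
    sub_zero, sub_eq_zero] at hs
  have key : H.nablaBar X (H.phibar (H.xi:E))
      = -((H.phi (H.Astar X) : E)) - H.gbar (H.Astar X : E) (H.V:E) • H.Nt
        + H.tau X • (H.V:E) := by
    rw [hs, H.weingarten_screen X, map_sub, map_neg, map_smul, H.phi_spec (H.Astar X),
      hphixi, smul_neg]
    abel
  calc H.nablaBar X (H.V:E) = H.nablaBar X (-(H.phibar (H.xi:E))) := by
        conv_lhs => rw [H.V_spec]
    _ = - H.nablaBar X (H.phibar (H.xi:E)) := H.nablaBar_neg X _
    _ = _ := by rw [key]; abel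

/-- if `B` is parallel then `ḡ(A*Y, A*X) = 0`. -/
lemma key1 (hpar : ∀ X Y Z : H.TM,
      H.D X (H.B Y Z) - H.B (H.nabla X Y) Z - H.B Y (H.nabla X Z) = 0)
    (X Y : H.TM) : H.gbar (H.Astar Y : E) (H.Astar X : E) = 0 := by
  have h := hpar X Y H.xi
  rw [H.Bxi Y, H.Bxi (H.nabla X Y), map_zero, H.nabla_xi X,
    H.BeqA Y (- H.Astar X - H.tau X • H.xi)] at h
  have hc : ((- H.Astar X - H.tau X • H.xi : H.TM) : E)
      = -(H.Astar X : E) - H.tau X • (H.xi : E) := by simp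
  rw [hc] at h
  simp only [map_sub, map_neg, map_smul, smul_eq_mul, H.gxi (H.Astar Y)] at h
  linear_combination h

/-- the key derivative identity `(★)`. -/
lemma star (hpar : ∀ X Y Z : H.TM,
      H.D X (H.B Y Z) - H.B (H.nabla X Y) Z - H.B Y (H.nabla X Z) = 0)
    (X Y : H.TM) : H.gbar (H.Astar Y : E) (H.phi X : E)
      = H.gbar (Y:E) (H.phi (H.Astar X) : E)
        + H.gbar (H.Astar X : E) (H.V:E) * H.gbar (Y:E) H.Nt
        - H.tau X * H.gbar (Y:E) (H.V:E) := by
  have h1 := H.nablaBar_metric X (Y:E) (H.V:E)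
  rw [H.gauss X Y, H.nbV X] at h1
  simp only [map_add, map_sub, map_smul, LinearMap.add_apply, LinearMap.sub_apply,
    LinearMap.smul_apply, smul_eq_mul, H.gbar_Nt_S (H.V:E) H.V_mem] at h1
  have h2 := hpar X Y H.zeta
  rw [H.Bzeta Y, H.Bzeta (H.nabla X Y), H.nabla_zeta X, H.BeqA Y (- H.phi X), map_neg] at h2
  have hc : ((- H.phi X : H.TM) : E) = -(H.phi X : E) := by simp
  rw [hc, map_neg] at h2
  linear_combination h1 + h2

end SasakiLightlikeHypersurface
/-- Let `(M,g)` be a lightlike hypersurface, tangent to the structure vector field `ζ`, of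
an indefinite Sasakian manifold `(M̄, φ̄, ζ, η, ḡ)`, whose local second fundamental form
`B` is parallel. Then for all `X, Y` tangent to `M`:
(i) `B(X, φY) + B(Y, φX) + τ(X) u(Y) = 0`, where `u(Y) = g(Y,V)`; (ii) `A*_ξ V = 0`;
(iii) `A*_ξ (φ (A*_ξ X)) = 0`. -/
theorem parallel_B_consequences
    (F : Type) [CommRing F] [Algebra ℝ F]
    (E : Type) [AddCommGroup E] [Module F E]
    (H : SasakiLightlikeHypersurface F E)
    (hpar : ∀ X Y Z : H.TM,
      H.D X (H.B Y Z) - H.B (H.nabla X Y) Z - H.B Y (H.nabla X Z) = 0) :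
    (∀ X Y : H.TM,
      H.B X (H.phi Y) + H.B Y (H.phi X) + H.tau X * H.gbar (Y : E) (H.V : E) = 0)
    ∧ H.Astar H.V = 0
    ∧ (∀ X : H.TM, H.Astar (H.phi (H.Astar X)) = 0) := by
  have parti : ∀ X Y : H.TM,
      H.B X (H.phi Y) + H.B Y (H.phi X) + H.tau X * H.gbar (Y : E) (H.V : E) = 0 := by
    intro X Y
    rw [H.BeqA X (H.phi Y), H.BeqA Y (H.phi X), H.star hpar X Y]
    have e1 := congrArg (H.gbar (Y:E)) (H.phi_spec (H.Astar X))
    simp only [map_add, map_smul, smul_eq_mul] at e1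
    have e2 := H.antisym (H.Astar X) Y
    have e3 := congrArg (H.gbar (H.Astar X : E)) (H.phi_spec Y)
    simp only [map_add, map_smul, smul_eq_mul] at e3
    have e4 := H.AstarN X
    have e5 := H.gbar_symm (H.phibar (H.Astar X : E)) (Y:E)
    linear_combination -e1 - e5 + e2 - e3 - H.gbar (Y:E) (H.V:E) * e4
  have hBV : ∀ X : H.TM, H.gbar (H.Astar X : E) (H.V : E) = 0 := by
    intro X
    have h := parti X H.xi
    have hphixi : H.phi H.xi = - H.V := by
      apply Subtype.ext
      have h1 := H.phi_spec H.xi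
      rw [H.xi_normal H.V, zero_smul, add_zero] at h1
      rw [← h1]
      simp [H.V_spec]
    rw [hphixi, H.BeqA X (- H.V), H.BeqA H.xi (H.phi X), H.xi_normal H.V, mul_zero,
      add_zero] at h
    have hc : ((-H.V : H.TM) : E) = -(H.V : E) := by simp
    rw [hc, map_neg] at h
    have h2 : H.gbar (H.Astar H.xi : E) (H.phi X : E) = 0 := by
      rw [H.Asymm]; exact H.gxi (H.Astar (H.phi X))
    linear_combination -h + h2
  have partii : H.Astar H.V = 0 := by
    apply H.zero_tangent
    · intro Y; rw [H.Asymm]; exact hBV Y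
    · exact H.AstarN H.V
  refine ⟨parti, partii, fun X => ?_⟩
  apply H.zero_tangent
  · intro W
    rw [H.Asymm]
    have hs := H.star hpar X (H.Astar W)
    rw [hBV X, hBV W, zero_mul, mul_zero, sub_zero, add_zero, H.Asymm] at hs
    rw [← hs]
    exact H.key1 hpar W (H.phi X)
  · exact H.AstarN _
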